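/- arXiv:1904.08730 — 2 statements merged into one kernel-verified Lean document; each statement's English description precedes it below -/
import Mathlib

section
/- For fixed t with 0 < t < 1, the function (α₁,...,αₙ) ↦ Σᵢ αᵢ·t^(αᵢ-1)/(1-t^(αᵢ)) is Schur-convex on (0,∞)ⁿ: if (α₁,...,αₙ) majorizes (α₁*,...,αₙ*), then Σᵢ αᵢ·t^(αᵢ-1)/(1-t^(αᵢ)) ≥ Σᵢ αᵢ*·t^(αᵢ*-1)/(1-t^(αᵢ*)). -/
/-- `Majorizes a b` : the vector `a` majorizes the vector `b`, i.e. for each `k`, the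
sum of the `k` largest entries of `b` is at most that of `a` (expressed via subsets),
and the total sums agree. -/
def Majorizes {n : ℕ} (a b : Fin n → ℝ) : Prop :=
  (∀ s : Finset (Fin n), ∃ t : Finset (Fin n), t.card = s.card ∧ ∑ i ∈ s, b i ≤ ∑ i ∈ t, a i) ∧
    ∑ i, a i = ∑ i, b i

/-!
With `s = -log t > 0`, the summand is `x ↦ (t s)⁻¹ g(s x)` for `g(u) = u / (eᵘ - 1)`, and `g` is
convex on `(0, ∞)`: the numerator of `g''` is `eᵘ ((u - 2) eᵘ + u + 2)`, and `(2 - u) eᵘ ≤ 2 + u`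
for `u ≥ 0` since the difference vanishes at `0` and has derivative `(u - 1) eᵘ + 1 ≥ 0`.

The inequality is then Karamata's. Sort both vectors decreasingly and bound `f aᵢ - f bᵢ` below
by `f'(bᵢ) (aᵢ - bᵢ)`. The slopes `f'(bᵢ)` decrease with `i`, while the partial sums of
`aᵢ - bᵢ` are nonnegative and add up to `0`, so Abel summation makes the total nonnegative.
-/

open Real Set Finset

theorem two_sub_mul_exp_le_two_add {u : ℝ} (hu : 0 ≤ u) : (2 - u) * exp u ≤ 2 + u := by
  have hderiv : ∀ v, HasDerivAt (fun v => (v - 2) * exp v + v + 2) ((v - 1) * exp v + 1) v :=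
    fun v => ((((hasDerivAt_id' v).sub_const 2).mul (hasDerivAt_exp v)).add (hasDerivAt_id' v)
      |>.add_const 2).congr_deriv (by ring)
  have hmono := monotone_of_hasDerivAt_nonneg hderiv fun v => by
    have := mul_le_mul_of_nonneg_right (add_one_le_exp (-v)) (exp_pos v).le
    rw [← exp_add, neg_add_cancel, exp_zero] at this
    show 0 ≤ (v - 1) * exp v + 1
    linarith
  have := hmono hu
  simp only [zero_sub, exp_zero, mul_one, add_zero] at this
  linarith

theorem convexOn_div_exp_sub_one : ConvexOn ℝ (Ioi 0) fun u : ℝ => u / (exp u - 1) := by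
  have hden : ∀ u ∈ Ioi (0 : ℝ), exp u - 1 ≠ 0 := fun u hu =>
    (sub_pos.2 (one_lt_exp_iff.2 hu)).ne'
  have hf' : ∀ u ∈ Ioi (0 : ℝ), HasDerivAt (fun u => u / (exp u - 1))
      ((exp u - 1 - u * exp u) / (exp u - 1) ^ 2) u := fun u hu =>
    ((hasDerivAt_id' u).div ((hasDerivAt_exp u).sub_const 1) (hden u hu)).congr_deriv (by ring)
  have hf'' : ∀ u ∈ Ioi (0 : ℝ), HasDerivAt (fun u => (exp u - 1 - u * exp u) / (exp u - 1) ^ 2)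
      (exp u * ((u - 2) * exp u + u + 2) / (exp u - 1) ^ 3) u := fun u hu => by
    refine ((((hasDerivAt_exp u).sub_const 1).sub ((hasDerivAt_id' u).mul (hasDerivAt_exp u))).div
      (((hasDerivAt_exp u).sub_const 1).pow 2) (pow_ne_zero 2 (hden u hu))).congr_deriv ?_
    simp only [Pi.pow_apply, Pi.sub_apply, Pi.mul_apply]
    field_simp [hden u hu]
    ring
  refine convexOn_of_hasDerivWithinAt2_nonneg (convex_Ioi 0)
    (fun u hu => (hf' u hu).continuousAt.continuousWithinAt)
    (fun u hu => (hf' u ?_).hasDerivWithinAt) (fun u hu => (hf'' u ?_).hasDerivWithinAt)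
    fun u hu => ?_ <;> rw [interior_Ioi] at hu
  · exact hu
  · exact hu
  · have hnum : 0 ≤ (u - 2) * exp u + u + 2 := by
      linarith [two_sub_mul_exp_le_two_add (le_of_lt hu)]
    have hexp := sub_pos.2 (one_lt_exp_iff.2 hu)
    positivity

theorem convexOn_mul_rpow_sub_one_div_one_sub_rpow {t : ℝ} (ht0 : 0 < t) (ht1 : t < 1) :
    ConvexOn ℝ (Ioi 0) fun x => x * t ^ (x - 1) / (1 - t ^ x) := by
  set s := -log t
  have hs : 0 < s := neg_pos.2 (log_neg ht0 ht1)
  have hscaled : ConvexOn ℝ (Ioi 0) fun x => (t * s)⁻¹ * (s * x / (exp (s * x) - 1)) := by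
    have := convexOn_div_exp_sub_one.comp_linearMap (LinearMap.mulLeft ℝ s)
    rw [show ⇑(LinearMap.mulLeft ℝ s) = (s * ·) from rfl, preimage_const_mul_Ioi₀ _ hs,
      zero_div] at this
    exact this.smul (by positivity)
  refine hscaled.congr fun x (hx : 0 < x) => ?_
  have hexp : exp (s * x) - 1 ≠ 0 := (sub_pos.2 (one_lt_exp_iff.2 (by positivity))).ne'
  have htx : t ^ x = (exp (s * x))⁻¹ := by
    rw [rpow_def_of_pos ht0, ← exp_neg]; congr 1; ring
  rw [rpow_sub_one ht0.ne', htx]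
  field_simp

section SortedSums

variable {ι : Type*} [LinearOrder ι]

theorem Finset.sum_mul_nonneg_of_antitoneOn {s : Finset ι} {c d : ι → ℝ} (hc : AntitoneOn c s)
    (hc₀ : ∀ i ∈ s, 0 ≤ c i) (hd : ∀ k ∈ s, 0 ≤ ∑ i ∈ s with i ≤ k, d i) :
    0 ≤ ∑ i ∈ s, c i * d i := by
  induction s using Finset.induction_on_max generalizing c with
  | empty => simp
  | insert a s hlt ih =>
    have ha : a ∉ s := fun h => lt_irrefl a (hlt a h)
    have htotal : 0 ≤ d a + ∑ i ∈ s, d i := by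
      have := hd a (mem_insert_self a s)
      rwa [filter_true_of_mem fun i hi => ?_, sum_insert ha] at this
      rcases mem_insert.1 hi with rfl | hi
      exacts [le_rfl, (hlt i hi).le]
    -- Split off the smallest weight `c a`; what remains has nonnegative antitone weights on `s`.
    have hrest : 0 ≤ ∑ i ∈ s, (c i - c a) * d i := by
      refine ih (fun i hi j hj hij => ?_) (fun i hi => ?_) fun k hk => ?_
      · exact sub_le_sub_right (hc (mem_insert_of_mem hi) (mem_insert_of_mem hj) hij) _
      · exact sub_nonneg.2 (hc (mem_insert_of_mem hi) (mem_insert_self a s) (hlt i hi).le)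
      · have := hd k (mem_insert_of_mem hk)
        rwa [filter_insert, if_neg (not_le.2 (hlt k hk))] at this
    calc 0 ≤ c a * (d a + ∑ i ∈ s, d i) + ∑ i ∈ s, (c i - c a) * d i :=
          add_nonneg (mul_nonneg (hc₀ a (mem_insert_self a s)) htotal) hrest
      _ = ∑ i ∈ insert a s, c i * d i := by
          simp only [sum_insert ha, mul_add, mul_sum, sub_mul, sum_sub_distrib]
          ring

theorem Finset.sum_mul_nonneg_of_antitone [Fintype ι] {c d : ι → ℝ} (hc : Antitone c)
    (hd : ∀ k, 0 ≤ ∑ i with i ≤ k, d i) (hd₀ : ∑ i, d i = 0) : 0 ≤ ∑ i, c i * d i := by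
  cases isEmpty_or_nonempty ι
  · simp
  obtain ⟨m, hm⟩ := Finite.exists_min c
  have := sum_mul_nonneg_of_antitoneOn (s := univ) (c := fun i => c i - c m) (d := d)
    (fun i _ j _ hij => sub_le_sub_right (hc hij) _) (fun i _ => sub_nonneg.2 (hm i))
    fun k _ => hd k
  simpa [sub_mul, sum_sub_distrib, ← mul_sum, hd₀] using this

theorem Finset.sum_le_sum_filter_le_of_antitone [Fintype ι] {A : ι → ℝ} (hA : Antitone A)
    {S : Finset ι} (k : ι) (hS : #S = #{i | i ≤ k}) : ∑ i ∈ S, A i ≤ ∑ i with i ≤ k, A i := by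
  set I : Finset ι := {i | i ≤ k}
  have hcard : #(S \ I) = #(I \ S) := card_sdiff_comm hS
  have hout : ∑ i ∈ S \ I, A i ≤ #(S \ I) • A k :=
    sum_le_card_nsmul _ _ _ fun i hi => hA (le_of_not_ge (by simpa [I] using (mem_sdiff.1 hi).2))
  have hin : #(I \ S) • A k ≤ ∑ i ∈ I \ S, A i :=
    card_nsmul_le_sum _ _ _ fun i hi => hA (by simpa [I] using (mem_sdiff.1 hi).1)
  rw [← sub_nonneg, ← sum_sdiff_sub_sum_sdiff, sub_nonneg]
  exact hout.trans (hcard ▸ hin)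

end SortedSums

section Majorization

variable {n : ℕ} {a b : Fin n → ℝ}

theorem Majorizes.comp_perm (h : Majorizes a b) (σ τ : Equiv.Perm (Fin n)) :
    Majorizes (a ∘ σ) (b ∘ τ) := by
  refine ⟨fun s => ?_, by simp only [Function.comp_apply, Equiv.sum_comp, h.2]⟩
  obtain ⟨t, hcard, hsum⟩ := h.1 (s.map τ.toEmbedding)
  refine ⟨t.map σ.symm.toEmbedding, by simpa using hcard, ?_⟩
  simpa [sum_map] using hsum

theorem Majorizes.sum_filter_le_le (h : Majorizes a b) (ha : Antitone a) (k : Fin n) :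
    ∑ i with i ≤ k, b i ≤ ∑ i with i ≤ k, a i := by
  obtain ⟨t, hcard, hsum⟩ := h.1 {i | i ≤ k}
  exact hsum.trans (sum_le_sum_filter_le_of_antitone ha k hcard)

end Majorization

theorem ConvexOn.add_rightDeriv_mul_sub_le {s : Set ℝ} {f : ℝ → ℝ} (hf : ConvexOn ℝ s f)
    {x y : ℝ} (hx : x ∈ s) (hy : y ∈ interior s) :
    f y + derivWithin f (Ioi y) y * (x - y) ≤ f x := by
  rcases lt_trichotomy x y with hxy | rfl | hxy
  · have := (hf.slope_le_leftDeriv_of_mem_interior hx hy hxy).trans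
      (hf.leftDeriv_le_rightDeriv_of_mem_interior hy)
    rw [slope_def_field, div_le_iff₀ (sub_pos.2 hxy)] at this
    linarith
  · simp
  · have := hf.rightDeriv_le_slope_of_mem_interior hy hx hxy
    rw [slope_def_field, le_div_iff₀ (sub_pos.2 hxy)] at this
    linarith

theorem Tuple.antitone_comp_sort_neg {n : ℕ} {α : Type*} [AddCommGroup α] [LinearOrder α]
    [IsOrderedAddMonoid α] (a : Fin n → α) : Antitone (a ∘ Tuple.sort (-a)) :=
  fun _ _ hij => by simpa using Tuple.monotone_sort (-a) hij

theorem Majorizes.sum_le_sum_of_convexOn {n : ℕ} {a b : Fin n → ℝ} {s : Set ℝ} {f : ℝ → ℝ}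
    (hf : ConvexOn ℝ s f) (h : Majorizes a b) (ha : ∀ i, a i ∈ s) (hb : ∀ i, b i ∈ interior s) :
    ∑ i, f (b i) ≤ ∑ i, f (a i) := by
  set f' := fun y => derivWithin f (Ioi y) y
  set A := a ∘ Tuple.sort (-a)
  set B := b ∘ Tuple.sort (-b)
  have hA : Antitone A := Tuple.antitone_comp_sort_neg a
  have hAB : Majorizes A B := h.comp_perm _ _
  have habel : 0 ≤ ∑ i, f' (B i) * (A i - B i) := by
    refine sum_mul_nonneg_of_antitone (fun i j hij => hf.monotoneOn_rightDeriv (hb _) (hb _)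
      (Tuple.antitone_comp_sort_neg b hij)) (fun k => ?_) ?_
    · simpa only [sum_sub_distrib, sub_nonneg] using hAB.sum_filter_le_le hA k
    · rw [sum_sub_distrib, hAB.2, sub_self]
  calc ∑ i, f (b i) = ∑ i, f (B i) := (Equiv.sum_comp _ fun i => f (b i)).symm
    _ ≤ ∑ i, (f (B i) + f' (B i) * (A i - B i)) := by
      simpa only [sum_add_distrib, le_add_iff_nonneg_right] using habel
    _ ≤ ∑ i, f (A i) := sum_le_sum fun i _ => hf.add_rightDeriv_mul_sub_le (ha _) (hb _)
    _ = ∑ i, f (a i) := Equiv.sum_comp _ fun i => f (a i)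

theorem sum_varphi_schur_convex (n : ℕ) (t : ℝ) (ht0 : 0 < t) (ht1 : t < 1)
    (α α' : Fin n → ℝ) (hα : ∀ i, 0 < α i) (hα' : ∀ i, 0 < α' i)
    (hmaj : Majorizes α α') :
    ∑ i, α' i * t ^ (α' i - 1) / (1 - t ^ (α' i)) ≤
      ∑ i, α i * t ^ (α i - 1) / (1 - t ^ (α i)) :=
  hmaj.sum_le_sum_of_convexOn (convexOn_mul_rpow_sub_one_div_one_sub_rpow ht0 ht1) hα
    (by rwa [interior_Ioi])
end

section
/- Let η(α, u) = u^α log(u)/(1-u^α) for α > 0 and u ∈ (0,1), and let u(θ) = 1-e^(-θx^(-φ)) for fixed x, φ > 0. If α₁ ≥ α₂ > 0 and 0 < θ₁ ≤ θ₂, then η(α₂, u(θ₂)) ≤ η(α₁, u(θ₁)). -/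
/-!
Writing `η(α, u) = g(u^α) / α` with `g w = w log w / (1 - w)`, monotonicity in `u` comes from
`g' w = (log w + 1 - w) / (1 - w)² < 0` on `(0, 1)`. Monotonicity in `α` comes from writing
`η(α, u) = log u · t / (1 - t)` with `t = u^α`, which decreases in `α` while `t / (1 - t)` increases
in `t` and `log u ≤ 0`.
-/

open Real Set

theorem hasDerivAt_mul_log_div_one_sub {w : ℝ} (hw₀ : 0 < w) (hw₁ : w < 1) :
    HasDerivAt (fun w : ℝ => w * log w / (1 - w)) ((log w + 1 - w) / (1 - w) ^ 2) w := by
  have hmul : HasDerivAt (fun w : ℝ => w * log w) (log w + 1) w :=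
    ((hasDerivAt_id' w).mul (hasDerivAt_log hw₀.ne')).congr_deriv (by field_simp)
  exact (hmul.div ((hasDerivAt_id' w).const_sub 1) (sub_ne_zero.2 hw₁.ne')).congr_deriv (by ring)

theorem strictAntiOn_mul_log_div_one_sub :
    StrictAntiOn (fun w : ℝ => w * log w / (1 - w)) (Ioo 0 1) := by
  have hderiv := fun w (hw : w ∈ Ioo (0 : ℝ) 1) => hasDerivAt_mul_log_div_one_sub hw.1 hw.2
  refine strictAntiOn_of_hasDerivWithinAt_neg (convex_Ioo 0 1)
    (fun w hw => (hderiv w hw).continuousAt.continuousWithinAt)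
    (f' := fun w => (log w + 1 - w) / (1 - w) ^ 2) ?_ ?_ <;> rw [interior_Ioo]
  · exact fun w hw => (hderiv w hw).hasDerivWithinAt
  · intro w hw
    have hlog : log w < w - 1 := log_lt_sub_one_of_pos hw.1 hw.2.ne
    exact div_neg_of_neg_of_pos (by linarith) (pow_pos (sub_pos.2 hw.2) 2)

noncomputable def eta (a u : ℝ) : ℝ := u ^ a * log u / (1 - u ^ a)

theorem rpow_mem_Ioo_zero_one {u a : ℝ} (hu : u ∈ Ioo (0 : ℝ) 1) (ha : 0 < a) :
    u ^ a ∈ Ioo (0 : ℝ) 1 :=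
  ⟨rpow_pos_of_pos hu.1 a, rpow_lt_one hu.1.le hu.2 ha⟩

theorem eta_eq_div {a u : ℝ} (ha : 0 < a) (hu : u ∈ Ioo (0 : ℝ) 1) :
    eta a u = u ^ a * log (u ^ a) / (1 - u ^ a) / a := by
  have hden : 1 - u ^ a ≠ 0 := sub_ne_zero.2 (rpow_mem_Ioo_zero_one hu ha).2.ne'
  rw [eta, log_rpow hu.1]
  field_simp

theorem eta_antitoneOn {a : ℝ} (ha : 0 < a) : AntitoneOn (eta a) (Ioo 0 1) := by
  intro u₁ hu₁ u₂ hu₂ hle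
  rw [eta_eq_div ha hu₁, eta_eq_div ha hu₂]
  refine div_le_div_of_nonneg_right ?_ ha.le
  exact strictAntiOn_mul_log_div_one_sub.antitoneOn (rpow_mem_Ioo_zero_one hu₁ ha)
    (rpow_mem_Ioo_zero_one hu₂ ha) (rpow_le_rpow hu₁.1.le hle ha.le)

theorem div_one_sub_le_div_one_sub {s t : ℝ} (hst : s ≤ t) (ht : t < 1) :
    s / (1 - s) ≤ t / (1 - t) := by
  rw [div_le_div_iff₀ (by linarith) (by linarith)]
  linarith

theorem eta_monotoneOn_left {u : ℝ} (hu : u ∈ Ioo (0 : ℝ) 1) :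
    MonotoneOn (fun a => eta a u) (Ioi 0) := by
  intro a₁ ha₁ a₂ ha₂ hle
  have hpow : u ^ a₂ ≤ u ^ a₁ := rpow_le_rpow_of_exponent_ge hu.1 hu.2.le hle
  have hratio := div_one_sub_le_div_one_sub hpow (rpow_mem_Ioo_zero_one hu ha₁).2
  calc eta a₁ u = log u * (u ^ a₁ / (1 - u ^ a₁)) := by rw [eta]; ring
    _ ≤ log u * (u ^ a₂ / (1 - u ^ a₂)) :=
      mul_le_mul_of_nonpos_left hratio (log_nonpos hu.1.le hu.2.le)
    _ = eta a₂ u := by rw [eta]; ring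

theorem one_sub_exp_neg_mul_mem_Ioo {c t : ℝ} (hc : 0 < c) (ht : 0 < t) :
    1 - exp (-t * c) ∈ Ioo (0 : ℝ) 1 := by
  have hneg : -t * c < 0 := by nlinarith
  constructor
  · linarith [exp_lt_one_iff.2 hneg]
  · linarith [exp_pos (-t * c)]

theorem monotone_one_sub_exp_neg_mul {c : ℝ} (hc : 0 ≤ c) :
    Monotone fun t : ℝ => 1 - exp (-t * c) := by
  intro t₁ t₂ ht
  have : -t₂ * c ≤ -t₁ * c := by nlinarith
  linarith [exp_le_exp.2 this]

theorem eta_combined_monotonicity_general (x φ θ₁ θ₂ α₁ α₂ : ℝ) (hx : 0 < x)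
    (hθ₁ : 0 < θ₁) (hθ : θ₁ ≤ θ₂) (hα₂ : 0 < α₂) (hα : α₂ ≤ α₁) :
    let η : ℝ → ℝ → ℝ := fun a u => u ^ a * Real.log u / (1 - u ^ a)
    let u : ℝ → ℝ := fun t => 1 - Real.exp (-t * x ^ (-φ))
    η α₂ (u θ₂) ≤ η α₁ (u θ₁) := by
  intro η u
  have hc : 0 < x ^ (-φ) := rpow_pos_of_pos hx _
  have hu₁ := one_sub_exp_neg_mul_mem_Ioo hc hθ₁
  have hu₂ := one_sub_exp_neg_mul_mem_Ioo hc (hθ₁.trans_le hθ)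
  calc eta α₂ (u θ₂) ≤ eta α₂ (u θ₁) :=
        eta_antitoneOn hα₂ hu₁ hu₂ (monotone_one_sub_exp_neg_mul hc.le hθ)
    _ ≤ eta α₁ (u θ₁) := eta_monotoneOn_left hu₁ hα₂ (hα₂.trans_le hα) hα

theorem eta_combined_monotonicity (x φ θ₁ θ₂ α₁ α₂ : ℝ) (hx : 0 < x) (hφ : 0 < φ)
    (hθ₁ : 0 < θ₁) (hθ : θ₁ ≤ θ₂) (hα₂ : 0 < α₂) (hα : α₂ ≤ α₁) :
    let η : ℝ → ℝ → ℝ := fun a u => u ^ a * Real.log u / (1 - u ^ a)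
    let u : ℝ → ℝ := fun t => 1 - Real.exp (-t * x ^ (-φ))
    η α₂ (u θ₂) ≤ η α₁ (u θ₁) :=
  eta_combined_monotonicity_general x φ θ₁ θ₂ α₁ α₂ hx hθ₁ hθ hα₂ hα
end
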